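/- Let G be a DAG with leaf set X and the lca-property. Then 𝒞(lca(Y)) = cl(Y) for every nonempty Y ⊆ X, where cl is the closure function of the clustering system 𝒞_G. -/

import Mathlib

namespace Dag

variable {V : Type*}

/-- Reachability order of a digraph: `v ⪯ w` iff there is a directed path from `w` to `v`. -/
def reach (adj : V → V → Prop) (v w : V) : Prop :=
  Relation.ReflTransGen (fun a b => adj b a) v w

/-- The digraph is acyclic: its reachability relation is antisymmetric. -/
def acyclic (adj : V → V → Prop) : Prop :=
  ∀ v w, reach adj v w → reach adj w v → v = w

/-- A leaf is a `⪯`-minimal vertex. -/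
def leaf (adj : V → V → Prop) (x : V) : Prop :=
  ∀ v, reach adj v x → v = x

/-- The set of leaves of the digraph. -/
def leaves (adj : V → V → Prop) : Set V := {x | leaf adj x}

/-- The cluster of `v`: all leaves that are descendants of `v`. -/
def cluster (adj : V → V → Prop) (v : V) : Set V :=
  {x | leaf adj x ∧ reach adj x v}

/-- The clustering system of the digraph. -/
def clusters (adj : V → V → Prop) : Set (Set V) := {C | ∃ v, C = cluster adj v}

/-- `w` is a least common ancestor of `A`: a `⪯`-minimal common ancestor of `A`. -/
def isLCA (adj : V → V → Prop) (A : Set V) (w : V) : Prop :=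
  (∀ a ∈ A, reach adj a w) ∧ ∀ u, (∀ a ∈ A, reach adj a u) → reach adj u w → u = w

/-- `A` has a unique least common ancestor. -/
def hasUniqueLCA (adj : V → V → Prop) (A : Set V) : Prop := ∃! w, isLCA adj A w

end Dag

/-- Closure function of a set system. -/
def SetSys.cl {X : Type*} (𝒞 : Set (Set X)) (A : Set X) : Set X :=
  ⋂₀ {C | C ∈ 𝒞 ∧ A ⊆ C}

/-! In a finite DAG every common ancestor `v` of `Y` lies above a `⪯`-minimal common ancestor,
i.e. above a least common ancestor of `Y`; by uniqueness this is `lca(Y)`, so `lca(Y) ⪯ v` and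
`𝒞(lca(Y)) ⊆ 𝒞(v)`. Hence `𝒞(lca(Y))` is the least cluster containing `Y`, which is `cl(Y)`. -/

theorem SetSys.cl_eq_of_isLeast {X : Type*} {𝒞 : Set (Set X)} {A C : Set X}
    (h : IsLeast {D | D ∈ 𝒞 ∧ A ⊆ D} C) : SetSys.cl 𝒞 A = C :=
  h.isGLB.sInf_eq

namespace Dag

variable {V : Type*} {adj : V → V → Prop}

theorem cluster_mono {u v : V} (huv : reach adj u v) : cluster adj u ⊆ cluster adj v :=
  fun _ ⟨hx, hxu⟩ => ⟨hx, hxu.trans huv⟩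

theorem subset_cluster {A : Set V} (hA : A ⊆ leaves adj) {v : V} (hv : ∀ a ∈ A, reach adj a v) :
    A ⊆ cluster adj v :=
  fun a ha => ⟨hA ha, hv a ha⟩

theorem wellFounded_strictReach [Finite V] (hacy : acyclic adj) :
    WellFounded fun u v : V => reach adj u v ∧ u ≠ v := by
  have : IsTrans V fun u v => reach adj u v ∧ u ≠ v :=
    ⟨fun _ b _ ⟨hab, hne⟩ ⟨hbc, _⟩ =>
      ⟨hab.trans hbc, fun hac => hne (hacy _ _ hab (hac ▸ hbc))⟩⟩
  have : Std.Irrefl fun u v : V => reach adj u v ∧ u ≠ v := ⟨fun _ h => h.2 rfl⟩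
  exact Finite.wellFounded_of_trans_of_irrefl _

theorem exists_isLCA_reach [Finite V] (hacy : acyclic adj) {A : Set V} {v : V}
    (hv : ∀ a ∈ A, reach adj a v) : ∃ u, isLCA adj A u ∧ reach adj u v := by
  obtain ⟨u, ⟨hu, huv⟩, hmin⟩ := (wellFounded_strictReach hacy).has_min
    {u | (∀ a ∈ A, reach adj a u) ∧ reach adj u v} ⟨v, hv, .refl⟩
  refine ⟨u, ⟨hu, fun u' hu' hu'u => ?_⟩, huv⟩
  by_contra hne
  exact hmin u' ⟨hu', hu'u.trans huv⟩ ⟨hu'u, hne⟩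

theorem reach_of_isLCA_of_hasUniqueLCA [Finite V] (hacy : acyclic adj) {A : Set V}
    (hA : hasUniqueLCA adj A) {w v : V} (hw : isLCA adj A w) (hv : ∀ a ∈ A, reach adj a v) :
    reach adj w v := by
  obtain ⟨u, hu, huv⟩ := exists_isLCA_reach hacy hv
  exact hA.unique hu hw ▸ huv

end Dag

/-- In a DAG with the lca-property, `𝒞(lca(Y)) = cl(Y)` for every nonempty leaf set `Y`. -/
theorem stmt7 {V : Type*} [Fintype V] (adj : V → V → Prop) (hacy : Dag.acyclic adj)
    (hlca : ∀ A : Set V, A ⊆ Dag.leaves adj → A.Nonempty → Dag.hasUniqueLCA adj A) :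
    ∀ Y : Set V, Y ⊆ Dag.leaves adj → Y.Nonempty →
      ∀ w : V, Dag.isLCA adj Y w →
        Dag.cluster adj w = SetSys.cl (Dag.clusters adj) Y := by
  intro Y hY hYne w hw
  refine (SetSys.cl_eq_of_isLeast ?_).symm
  refine ⟨⟨⟨w, rfl⟩, Dag.subset_cluster hY hw.1⟩, ?_⟩
  rintro _ ⟨⟨v, rfl⟩, hYv⟩
  exact Dag.cluster_mono <|
    Dag.reach_of_isLCA_of_hasUniqueLCA hacy (hlca Y hY hYne) hw fun y hy => (hYv hy).2
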